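/- arXiv:1709.05537 — 2 statements merged into one kernel-verified Lean document; each statement's English description precedes it below -/
import Mathlib

section
/- Picone's identity for the p-Laplacian: For p > 1 and vectors x, y in R^N with y ≠ 0, and nonnegative reals a, b with b > 0, the quantity |x|^p + (p-1)(a^p/b^p)|y|^p - p(a^{p-1}/b^{p-1}) (x · |y|^{p-2} y) is nonnegative. -/
/-! With `t = a / b`, Cauchy–Schwarz bounds the inner product by `‖x‖ ‖y‖ ^ (p - 1)`, and Young's
inequality with exponents `p` and `p / (p - 1)` applied to `‖x‖` and `(t ‖y‖) ^ (p - 1)` gives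
`p ‖x‖ (t ‖y‖) ^ (p - 1) ≤ ‖x‖ ^ p + (p - 1) (t ‖y‖) ^ p`. -/

open Real

theorem Real.mul_mul_rpow_sub_one_le {p u v : ℝ} (hp : 1 < p) (hu : 0 ≤ u) (hv : 0 ≤ v) :
    p * (u * v ^ (p - 1)) ≤ u ^ p + (p - 1) * v ^ p := by
  have hp₁ : p - 1 ≠ 0 := sub_ne_zero.mpr hp.ne'
  have young := young_inequality_of_nonneg hu (rpow_nonneg hv (p - 1))
    (HolderConjugate.conjExponent hp)
  have hconj : (v ^ (p - 1)) ^ conjExponent p = v ^ p := by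
    rw [← rpow_mul hv, conjExponent, mul_div_cancel₀ p hp₁]
  rw [hconj, conjExponent] at young
  calc p * (u * v ^ (p - 1)) ≤ p * (u ^ p / p + v ^ p / (p / (p - 1))) := by gcongr
    _ = u ^ p + (p - 1) * v ^ p := by field_simp

section InnerProductSpace

variable {E : Type*} [NormedAddCommGroup E] [InnerProductSpace ℝ E]

theorem real_inner_rpow_sub_two_smul_le {p : ℝ} (hp : p ≠ 1) (x y : E) :
    inner ℝ x (‖y‖ ^ (p - 2) • y) ≤ ‖x‖ * ‖y‖ ^ (p - 1) := by
  have hpow : ‖y‖ ^ (p - 1) = ‖y‖ ^ (p - 2) * ‖y‖ := by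
    rw [← rpow_add_one' (norm_nonneg y) (by intro h; apply hp; linarith)]
    ring_nf
  rw [real_inner_smul_right, hpow, mul_left_comm]
  exact mul_le_mul_of_nonneg_left (real_inner_le_norm x y) (rpow_nonneg (norm_nonneg y) _)

theorem picone_form_nonneg {p t : ℝ} (hp : 1 < p) (ht : 0 ≤ t) (x y : E) :
    0 ≤ ‖x‖ ^ p + (p - 1) * t ^ p * ‖y‖ ^ p
        - p * t ^ (p - 1) * inner ℝ x (‖y‖ ^ (p - 2) • y) := by
  have hty : 0 ≤ t * ‖y‖ := mul_nonneg ht (norm_nonneg y)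
  have hinner : p * t ^ (p - 1) * inner ℝ x (‖y‖ ^ (p - 2) • y)
      ≤ p * (‖x‖ * (t * ‖y‖) ^ (p - 1)) := by
    calc p * t ^ (p - 1) * inner ℝ x (‖y‖ ^ (p - 2) • y)
        ≤ p * t ^ (p - 1) * (‖x‖ * ‖y‖ ^ (p - 1)) := by
          gcongr
          exact real_inner_rpow_sub_two_smul_le hp.ne' x y
      _ = p * (‖x‖ * (t * ‖y‖) ^ (p - 1)) := by
          rw [mul_rpow ht (norm_nonneg y)]
          ring
  have hpow : t ^ p * ‖y‖ ^ p = (t * ‖y‖) ^ p := (mul_rpow ht (norm_nonneg y)).symm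
  have young := mul_mul_rpow_sub_one_le hp (norm_nonneg x) hty
  rw [mul_assoc (p - 1), hpow]
  linarith

end InnerProductSpace

theorem picone_identity_nonneg_general (N : ℕ) (p : ℝ) (hp : 1 < p)
    (x y : EuclideanSpace ℝ (Fin N))
    (a b : ℝ) (ha : 0 ≤ a) (hb : 0 < b) :
    0 ≤ ‖x‖ ^ p + (p - 1) * (a ^ p / b ^ p) * ‖y‖ ^ p
        - p * (a ^ (p - 1) / b ^ (p - 1)) * (inner ℝ x ((‖y‖ ^ (p - 2)) • y) : ℝ) := by
  rw [← div_rpow ha hb.le, ← div_rpow ha hb.le]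
  exact picone_form_nonneg hp (div_nonneg ha hb.le) x y

theorem picone_identity_nonneg (N : ℕ) (hN : 1 ≤ N) (p : ℝ) (hp : 1 < p)
    (x y : EuclideanSpace ℝ (Fin N)) (hy : y ≠ 0)
    (a b : ℝ) (ha : 0 ≤ a) (hb : 0 < b) :
    0 ≤ ‖x‖ ^ p + (p - 1) * (a ^ p / b ^ p) * ‖y‖ ^ p
        - p * (a ^ (p - 1) / b ^ (p - 1)) * (inner ℝ x ((‖y‖ ^ (p - 2)) • y) : ℝ) :=
  picone_identity_nonneg_general N p hp x y a b ha hb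
end

section
/- For the function f(t) = t^{p*-1}/(ln(e+t))^α with α > 0, lim_{t→+∞} (p* F(t) - t f(t))/(t f(t) H(t)) = α/p*, where F(t) = ∫₀ᵗ f and H(t) = 1/ln(e+t). -/
/-!
With `D t = t f(t) H(t) = t ^ p / log (e + t) ^ (α + 1)` and `G t = p F(t) - t f(t)`, one computes
`G' t = α t ^ p / ((e + t) log (e + t) ^ (α + 1))` and
`D' t = t ^ (p - 1) / log (e + t) ^ (α + 1) * (p - (α + 1) t / ((e + t) log (e + t)))`,
so `G' / D' → α / p`. Since `D → ∞`, L'Hôpital's rule in its `∞ / ∞` form gives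
`G / D → α / p`; that rule follows from the fact that `f' = o(g')` integrates to `f = o(g)`
when `g' ≥ 0` and `g → ∞`.
-/

open Filter Real Set Asymptotics Topology MeasureTheory

theorem isLittleO_atTop_of_hasDerivAt {f g f' g' : ℝ → ℝ}
    (hf : ∀ᶠ x in atTop, HasDerivAt f (f' x) x) (hg : ∀ᶠ x in atTop, HasDerivAt g (g' x) x)
    (hg' : ∀ᶠ x in atTop, 0 ≤ g' x) (hgtop : Tendsto g atTop atTop) (h : f' =o[atTop] g') :
    f =o[atTop] g := by
  refine isLittleO_iff.2 fun c hc => ?_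
  obtain ⟨b, hb⟩ := eventually_atTop.1 (hf.and (hg.and (hg'.and (h.def (half_pos hc)))))
  -- `‖f‖` stays below the barrier, whose derivative `c / 2 * g'` dominates `‖f'‖` past `b`.
  have hfence : ∀ t, b ≤ t → ‖f t‖ ≤ ‖f b‖ + c / 2 * (g t - g b) := by
    intro t ht
    refine image_norm_le_of_norm_deriv_right_le_deriv_boundary' (f' := f')
      (B := fun x => ‖f b‖ + c / 2 * (g x - g b)) (B' := fun x => c / 2 * g' x)
      (fun x hx => (hb x hx.1).1.continuousAt.continuousWithinAt)
      (fun x hx => (hb x hx.1).1.hasDerivWithinAt) (by simp)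
      (fun x hx => ((hb x hx.1).2.1.continuousAt.sub continuousAt_const).const_mul _
        |>.const_add _ |>.continuousWithinAt)
      (fun x hx => (((hb x hx.1).2.1.sub_const (g b)).const_mul (c / 2)).const_add _
        |>.hasDerivWithinAt)
      (fun x hx => ?_) ⟨ht, le_rfl⟩
    obtain ⟨-, -, hpos, hle⟩ := hb x hx.1
    rwa [Real.norm_of_nonneg hpos] at hle
  filter_upwards [eventually_ge_atTop b, hgtop.eventually_ge_atTop 0,
    hgtop.eventually_ge_atTop (2 / c * ‖f b‖ - g b)] with t hbt hg0 hgt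
  rw [Real.norm_of_nonneg hg0]
  have := hfence t hbt
  rw [div_mul_eq_mul_div, sub_le_iff_le_add, div_le_iff₀ hc] at hgt
  nlinarith

theorem lhopital_atTop_of_tendsto_atTop {f g f' g' : ℝ → ℝ} {l : ℝ}
    (hf : ∀ᶠ x in atTop, HasDerivAt f (f' x) x) (hg : ∀ᶠ x in atTop, HasDerivAt g (g' x) x)
    (hg' : ∀ᶠ x in atTop, 0 < g' x) (hgtop : Tendsto g atTop atTop)
    (hdiv : Tendsto (fun x => f' x / g' x) atTop (𝓝 l)) :
    Tendsto (fun x => f x / g x) atTop (𝓝 l) := by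
  have hderiv : (fun x => f' x - l * g' x) =o[atTop] g' := by
    refine (isLittleO_iff_tendsto' (hg'.mono fun x hx h0 => absurd h0 hx.ne')).2 ?_
    have := hdiv.sub_const l
    rw [sub_self] at this
    refine this.congr' (hg'.mono fun x hx => ?_)
    field_simp
  have hsmall := isLittleO_atTop_of_hasDerivAt
    (hf.and hg |>.mono fun x hx => hx.1.sub (hx.2.const_mul l))
    hg (hg'.mono fun x hx => hx.le) hgtop hderiv
  have hshifted := hsmall.tendsto_div_nhds_zero.add_const l
  rw [zero_add] at hshifted
  refine hshifted.congr' ((hgtop.eventually_gt_atTop 0).mono fun x hx => ?_)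
  rw [Pi.sub_apply]
  field_simp
  ring

/-- The reciprocal of the paper's `H`. -/
noncomputable def shiftedLog (t : ℝ) : ℝ := log (exp 1 + t)

lemma one_le_shiftedLog {t : ℝ} (ht : 0 ≤ t) : 1 ≤ shiftedLog t := by
  rw [shiftedLog, le_log_iff_exp_le (by positivity)]
  linarith

lemma shiftedLog_pos {t : ℝ} (ht : 0 ≤ t) : 0 < shiftedLog t :=
  one_pos.trans_le (one_le_shiftedLog ht)

lemma hasDerivAt_shiftedLog {x : ℝ} (hx : 0 ≤ x) :
    HasDerivAt shiftedLog (exp 1 + x)⁻¹ x := by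
  unfold shiftedLog
  simpa using ((hasDerivAt_id x).const_add (exp 1)).log (by positivity)

lemma tendsto_shiftedLog_atTop : Tendsto shiftedLog atTop atTop :=
  tendsto_log_atTop.comp (tendsto_atTop_add_const_left atTop (exp 1) tendsto_id)

lemma continuousOn_rpow_div_shiftedLog_rpow (q b : ℝ) :
    ContinuousOn (fun t => t ^ q / shiftedLog t ^ b) (Ioi 0) := fun x hx =>
  ((continuousAt_rpow_const x q (Or.inl (ne_of_gt hx))).div
    ((hasDerivAt_shiftedLog (le_of_lt hx)).continuousAt.rpow_const
      (Or.inl (shiftedLog_pos (le_of_lt hx)).ne'))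
    (rpow_pos_of_pos (shiftedLog_pos (le_of_lt hx)) b).ne').continuousWithinAt

lemma intervalIntegrable_rpow_div_shiftedLog_rpow {q : ℝ} (hq : -1 < q) (b : ℝ) {t : ℝ}
    (ht : 0 ≤ t) : IntervalIntegrable (fun s => s ^ q / shiftedLog s ^ b) volume 0 t := by
  simp only [div_eq_mul_inv]
  refine (intervalIntegral.intervalIntegrable_rpow' hq).mul_continuousOn fun x hx => ?_
  rw [uIcc_of_le ht] at hx
  have hpos := shiftedLog_pos hx.1
  exact ((hasDerivAt_shiftedLog hx.1).continuousAt.rpow_const (Or.inl hpos.ne')).inv₀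
    (rpow_pos_of_pos hpos b).ne' |>.continuousWithinAt

lemma hasDerivAt_rpow_div_shiftedLog_rpow (q b : ℝ) {x : ℝ} (hx : 0 < x) :
    HasDerivAt (fun t => t ^ q / shiftedLog t ^ b)
      (x ^ (q - 1) / shiftedLog x ^ b * (q - b * (x / (exp 1 + x)) / shiftedLog x)) x := by
  have hℓ := shiftedLog_pos hx.le
  refine ((hasDerivAt_rpow_const (p := q) (Or.inl hx.ne')).div
    ((hasDerivAt_shiftedLog hx.le).rpow_const (p := b) (Or.inl hℓ.ne'))
    (rpow_pos_of_pos hℓ b).ne').congr_deriv ?_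
  rw [rpow_sub_one hx.ne', rpow_sub_one hℓ.ne']
  have : 0 < shiftedLog x ^ b := rpow_pos_of_pos hℓ b
  field_simp

lemma tendsto_rpow_div_shiftedLog_rpow_atTop {q : ℝ} (hq : 0 < q) (b : ℝ) :
    Tendsto (fun t => t ^ q / shiftedLog t ^ b) atTop atTop := by
  have hshift : (fun t : ℝ => exp 1 + t) =O[atTop] id :=
    (isLittleO_const_id_atTop _).isBigO.add (isBigO_refl _ _)
  have hsmall : (fun t => shiftedLog t ^ b) =o[atTop] fun t => t ^ q :=
    ((isLittleO_log_rpow_rpow_atTop b hq).comp_tendsto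
      (tendsto_atTop_add_const_left atTop (exp 1) tendsto_id)).trans_isBigO
      (hshift.rpow hq.le (eventually_ge_atTop 0))
  have hpos : ∀ᶠ t in atTop, 0 < shiftedLog t ^ b / t ^ q :=
    (eventually_gt_atTop 0).mono fun t ht =>
      div_pos (rpow_pos_of_pos (shiftedLog_pos ht.le) b) (rpow_pos_of_pos ht q)
  exact (tendsto_nhdsWithin_iff.2 ⟨hsmall.tendsto_div_nhds_zero, hpos⟩).inv_tendsto_nhdsGT_zero
    |>.congr fun t => inv_div _ _

lemma tendsto_div_const_add_atTop (c : ℝ) :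
    Tendsto (fun x : ℝ => x / (c + x)) atTop (𝓝 1) := by
  have h := tendsto_const_nhds (x := (1 : ℝ)).sub
    (tendsto_const_nhds (x := c).div_atTop (tendsto_atTop_add_const_left atTop c tendsto_id))
  rw [sub_zero] at h
  refine h.congr' ((eventually_gt_atTop (-c)).mono fun x hx => ?_)
  dsimp only [id]
  have : c + x ≠ 0 := by linarith
  field_simp
  ring

lemma hasDerivAt_mul_integral_sub_rpow_div {p : ℝ} (hp : 0 < p) (a : ℝ) {x : ℝ} (hx : 0 < x) :
    HasDerivAt
      (fun t => p * (∫ s in (0 : ℝ)..t, s ^ (p - 1) / shiftedLog s ^ a) -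
        t ^ p / shiftedLog t ^ a)
      (x ^ (p - 1) / shiftedLog x ^ (a + 1) * (a * (x / (exp 1 + x)))) x := by
  have hcont := continuousOn_rpow_div_shiftedLog_rpow (p - 1) a
  have hF : HasDerivAt (fun t => ∫ s in (0 : ℝ)..t, s ^ (p - 1) / shiftedLog s ^ a)
      (x ^ (p - 1) / shiftedLog x ^ a) x :=
    intervalIntegral.integral_hasDerivAt_right
      (intervalIntegrable_rpow_div_shiftedLog_rpow (by linarith) a hx.le)
      (hcont.stronglyMeasurableAtFilter isOpen_Ioi x hx) (hcont.continuousAt (Ioi_mem_nhds hx))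
  refine ((hF.const_mul p).sub (hasDerivAt_rpow_div_shiftedLog_rpow p a hx)).congr_deriv ?_
  have hℓ := shiftedLog_pos hx.le
  have : 0 < shiftedLog x ^ a := rpow_pos_of_pos hℓ a
  rw [rpow_add_one hℓ.ne']
  field_simp
  ring

lemma mul_rpow_sub_one_div {t : ℝ} (ht : 0 < t) (p c : ℝ) :
    t * (t ^ (p - 1) / c) = t ^ p / c := by
  rw [rpow_sub_one ht.ne']
  field_simp

theorem H3pp_example_limit_general (pstar α : ℝ) (hpstar : 1 < pstar) :
    Filter.Tendsto
      (fun t : ℝ =>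
        (pstar * (∫ s in (0:ℝ)..t, s ^ (pstar - 1) / (Real.log (Real.exp 1 + s)) ^ α)
            - t * (t ^ (pstar - 1) / (Real.log (Real.exp 1 + t)) ^ α)) /
          (t * (t ^ (pstar - 1) / (Real.log (Real.exp 1 + t)) ^ α) *
            (1 / Real.log (Real.exp 1 + t))))
      Filter.atTop (nhds (α / pstar)) := by
  have hp : 0 < pstar := by linarith
  have hu := tendsto_div_const_add_atTop (exp 1)
  have hbracket : Tendsto (fun x => pstar - (α + 1) * (x / (exp 1 + x)) / shiftedLog x) atTop
      (𝓝 pstar) := by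
    simpa using
      tendsto_const_nhds.sub ((tendsto_const_nhds.mul hu).div_atTop tendsto_shiftedLog_atTop)
  have hQ : ∀ᶠ x in atTop, 0 < x ^ (pstar - 1) / shiftedLog x ^ (α + 1) :=
    (eventually_gt_atTop 0).mono fun x hx =>
      div_pos (rpow_pos_of_pos hx _) (rpow_pos_of_pos (shiftedLog_pos hx.le) _)
  have hlim := lhopital_atTop_of_tendsto_atTop
    ((eventually_gt_atTop 0).mono fun x hx => hasDerivAt_mul_integral_sub_rpow_div hp α hx)
    ((eventually_gt_atTop 0).mono fun x hx =>
      hasDerivAt_rpow_div_shiftedLog_rpow pstar (α + 1) hx)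
    ((hQ.and (hbracket.eventually (eventually_gt_nhds hp))).mono fun x hx => mul_pos hx.1 hx.2)
    (tendsto_rpow_div_shiftedLog_rpow_atTop hp (α + 1))
    (by
      simpa using ((tendsto_const_nhds (x := α)).mul hu).div hbracket hp.ne' |>.congr'
        (hQ.mono fun x hx => (mul_div_mul_left _ _ hx.ne').symm))
  refine hlim.congr' ((eventually_gt_atTop 0).mono fun t ht => ?_)
  have hℓ : 0 < log (exp 1 + t) := shiftedLog_pos ht.le
  dsimp only
  rw [mul_rpow_sub_one_div ht, div_mul_div_comm, mul_one, ← rpow_add_one hℓ.ne']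
  rfl

theorem H3pp_example_limit (pstar α : ℝ) (hpstar : 1 < pstar) (hα : 0 < α) :
    Filter.Tendsto
      (fun t : ℝ =>
        (pstar * (∫ s in (0:ℝ)..t, s ^ (pstar - 1) / (Real.log (Real.exp 1 + s)) ^ α)
            - t * (t ^ (pstar - 1) / (Real.log (Real.exp 1 + t)) ^ α)) /
          (t * (t ^ (pstar - 1) / (Real.log (Real.exp 1 + t)) ^ α) *
            (1 / Real.log (Real.exp 1 + t))))
      Filter.atTop (nhds (α / pstar)) :=
  H3pp_example_limit_general pstar α hpstar
end
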